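/- There is an absolute constant C > 0 with the following property. Let k ≥ 1 and t be integers with 0 ≤ t ≤ k, and let a be an integer with 0 ≤ a ≤ 2^t − 1. Then ∑_{0 ≤ r < 2^k, r ≡ a (mod 2^t)} |ε̂_k(r)| ≤ C · 2^{(1/2 − c)(k−t)} · |ε̂_t(a)| · k, where c = 1/2 − θ₀/2 and θ₀ = log₂ √(2 + √2). -/

import Mathlib

/-!
Splitting `x` by parity gives `ε̂_{m+1}(r) = (1 - e^{-2πir/2^{m+1}})/2 · ε̂_m(r)`, whose factor has
modulus `|sin(πr/2^{m+1})|`. Since `ε̂_t` is `2^t`-periodic, the sum over `r ≡ a (mod 2^t)` is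
`|ε̂_t(a)| · S_{k-t}(a/2^t)`, where `S_n(x) = ∑_{s<2^n} ∏_{i≤n} |sin(π(x+s)/2^i)|` obeys
`S_{n+1}(x) = |sin(πx/2)| S_n(x/2) + |cos(πx/2)| S_n((x+1)/2)`. One step multiplies `sup S` by at
most `√2`, two steps by at most `√(2+√2)`, so `S_n ≤ √2 · (2+√2)^{n/4} = √2 · 2^{θ₀ n/2}`.
-/

/-- `eps n = 1` if the binary digit sum of `n` is even, and `-1` otherwise. -/
noncomputable def eps (n : ℕ) : ℂ :=
  if Even ((Nat.digits 2 n).sum) then 1 else -1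

/-- The discrete Fourier coefficient
`ε̂_m(r) = 2^{-m} ∑_{x=0}^{2^m-1} ε(x) e^{-2πirx/2^m}`. -/
noncomputable def epsHat (m : ℕ) (r : ℕ) : ℂ :=
  (2 : ℂ) ^ (-(m : ℤ)) *
    ∑ x ∈ Finset.range (2 ^ m),
      eps x * Complex.exp (-(2 * Real.pi * Complex.I * r * x) / 2 ^ m)

open Finset Real

lemma eps_two_mul (n : ℕ) : eps (2 * n) = eps n := by
  rcases Nat.eq_zero_or_pos n with rfl | hn
  · rfl
  · simp [eps, Nat.digits_def' one_lt_two (by omega : 0 < 2 * n)]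

lemma eps_two_mul_add_one (n : ℕ) : eps (2 * n + 1) = -eps n := by
  rw [eps, eps, Nat.digits_def' one_lt_two (by omega), Nat.mul_add_mod_self_left,
    Nat.mul_add_div two_pos]
  by_cases h : Even (Nat.digits 2 n).sum <;> simp [h, add_comm 1, Nat.even_add_one]

lemma Finset.sum_range_two_mul {M : Type*} [AddCommMonoid M] (f : ℕ → M) (n : ℕ) :
    ∑ x ∈ range (2 * n), f x = ∑ y ∈ range n, (f (2 * y) + f (2 * y + 1)) := by
  induction n with
  | zero => simp
  | succ n ih =>
    rw [mul_add, mul_one, sum_range_succ, sum_range_succ, sum_range_succ, ih, add_assoc]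

lemma sum_eps_mul_pow_two_pow_succ (ω : ℂ) (m : ℕ) :
    ∑ x ∈ range (2 ^ (m + 1)), eps x * ω ^ x =
      (1 - ω) * ∑ x ∈ range (2 ^ m), eps x * (ω ^ 2) ^ x := by
  rw [pow_succ', sum_range_two_mul, mul_sum]
  refine sum_congr rfl fun x _ => ?_
  rw [eps_two_mul, eps_two_mul_add_one, pow_succ, pow_mul]
  ring

noncomputable def expNegTwoPiI (y : ℝ) : ℂ := Complex.exp (-(2 * π * Complex.I * y))

lemma expNegTwoPiI_add_natCast (y : ℝ) (s : ℕ) : expNegTwoPiI (y + s) = expNegTwoPiI y := by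
  have h : -(2 * π * Complex.I * ((y + s : ℝ) : ℂ))
      = -(2 * π * Complex.I * y) + ((-s : ℤ) : ℂ) * (2 * π * Complex.I) := by push_cast; ring
  rw [expNegTwoPiI, expNegTwoPiI, h, Complex.exp_add, Complex.exp_int_mul_two_pi_mul_I, mul_one]

lemma expNegTwoPiI_half_sq (y : ℝ) : expNegTwoPiI (y / 2) ^ 2 = expNegTwoPiI y := by
  rw [expNegTwoPiI, expNegTwoPiI, ← Complex.exp_nat_mul]
  push_cast
  ring_nf

lemma norm_one_sub_expNegTwoPiI_div_two (y : ℝ) : ‖(1 - expNegTwoPiI y) / 2‖ = |sin (π * y)| := by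
  have h : -(2 * π * Complex.I * y) = Complex.I * ((-(2 * π * y) : ℝ) : ℂ) := by push_cast; ring
  rw [norm_div, norm_sub_rev, expNegTwoPiI, h, Complex.norm_exp_I_mul_ofReal_sub_one]
  rw [show -(2 * π * y) / 2 = -(π * y) by ring, sin_neg, norm_mul, Complex.norm_two, norm_neg,
    norm_eq_abs, norm_eq_abs, abs_two, mul_div_cancel_left₀ _ two_ne_zero]

lemma epsHat_eq_sum_pow (m r : ℕ) :
    epsHat m r =
      (2 : ℂ) ^ (-(m : ℤ)) * ∑ x ∈ range (2 ^ m), eps x * expNegTwoPiI (r / 2 ^ m) ^ x := by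
  unfold epsHat expNegTwoPiI
  congr 1
  refine sum_congr rfl fun x _ => ?_
  rw [← Complex.exp_nat_mul]
  push_cast
  ring_nf

lemma epsHat_succ (m r : ℕ) :
    epsHat (m + 1) r = (1 - expNegTwoPiI (r / 2 ^ (m + 1))) / 2 * epsHat m r := by
  rw [epsHat_eq_sum_pow, epsHat_eq_sum_pow, sum_eps_mul_pow_two_pow_succ, pow_succ, ← div_div,
    expNegTwoPiI_half_sq, Nat.cast_succ, neg_add, zpow_add₀ two_ne_zero]
  ring

lemma norm_epsHat_add (t n r : ℕ) :
    ‖epsHat (t + n) r‖ = ‖epsHat t r‖ * ∏ i ∈ range n, |sin (π * r / 2 ^ (t + i + 1))| := by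
  induction n with
  | zero => simp
  | succ n ih =>
    rw [← add_assoc, epsHat_succ, norm_mul, norm_one_sub_expNegTwoPiI_div_two, ih,
      prod_range_succ, mul_div_assoc]
    ring

lemma epsHat_add_two_pow_mul (t a s : ℕ) : epsHat t (a + 2 ^ t * s) = epsHat t a := by
  have h : ((a + 2 ^ t * s : ℕ) : ℝ) / 2 ^ t = a / 2 ^ t + s := by
    push_cast
    field_simp
  rw [epsHat_eq_sum_pow, epsHat_eq_sum_pow, h, expNegTwoPiI_add_natCast]

lemma Finset.sum_filter_mod_eq {M : Type*} [AddCommMonoid M] (f : ℕ → M) {q a : ℕ} (ha : a < q)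
    (N : ℕ) :
    ∑ r ∈ (range (q * N)).filter (fun r => r % q = a), f r = ∑ s ∈ range N, f (a + q * s) := by
  have hq : 0 < q := by omega
  symm
  refine sum_nbij' (fun s => a + q * s) (fun r => r / q) (fun s hs => ?_) (fun r hr => ?_)
    (fun s _ => ?_) (fun r hr => ?_) (fun _ _ => rfl)
  · rw [mem_range] at hs
    rw [mem_filter, mem_range]
    refine ⟨?_, by rw [Nat.add_mul_mod_self_left, Nat.mod_eq_of_lt ha]⟩
    nlinarith
  · rw [mem_filter, mem_range] at hr
    rw [mem_range]
    exact Nat.div_lt_of_lt_mul hr.1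
  · simp [Nat.add_mul_div_left _ _ hq, Nat.div_eq_of_lt ha]
  · rw [mem_filter] at hr
    rw [← hr.2, Nat.mod_add_div]

noncomputable def sinProdSum (n : ℕ) (x : ℝ) : ℝ :=
  ∑ s ∈ range (2 ^ n), ∏ i ∈ range n, |sin (π * (x + s) / 2 ^ (i + 1))|

lemma sum_norm_epsHat_residue_class {t a : ℕ} (ha : a < 2 ^ t) (n : ℕ) :
    ∑ r ∈ (range (2 ^ (t + n))).filter (fun r => r % 2 ^ t = a), ‖epsHat (t + n) r‖ =
      ‖epsHat t a‖ * sinProdSum n (a / 2 ^ t) := by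
  rw [pow_add, sum_filter_mod_eq _ ha, sinProdSum, mul_sum]
  refine sum_congr rfl fun s _ => ?_
  rw [norm_epsHat_add, epsHat_add_two_pow_mul]
  congr 1
  refine prod_congr rfl fun i _ => ?_
  congr 2
  push_cast
  field_simp
  ring

lemma abs_sin_add_nat_mul_pi (x : ℝ) (n : ℕ) : |sin (x + n * π)| = |sin x| := by
  rw [sin_add_nat_mul_pi, abs_mul, abs_pow, abs_neg, abs_one, one_pow, one_mul]

lemma sinProdSum_zero (x : ℝ) : sinProdSum 0 x = 1 := by
  simp [sinProdSum]

lemma sinProdSum_nonneg (n : ℕ) (x : ℝ) : 0 ≤ sinProdSum n x :=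
  sum_nonneg fun _ _ => prod_nonneg fun _ _ => abs_nonneg _

lemma sinProdSum_succ (n : ℕ) (x : ℝ) :
    sinProdSum (n + 1) x =
      |sin (π * x / 2)| * sinProdSum n (x / 2) +
        |cos (π * x / 2)| * sinProdSum n ((x + 1) / 2) := by
  rw [sinProdSum, pow_succ', sum_range_two_mul, sum_add_distrib, sinProdSum, sinProdSum, mul_sum,
    mul_sum]
  congr 1 <;> refine sum_congr rfl fun y _ => ?_ <;> rw [prod_range_succ', mul_comm]
  · congr 1
    · rw [← abs_sin_add_nat_mul_pi (π * x / 2) y]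
      congr 2
      push_cast
      ring
    · refine prod_congr rfl fun i _ => ?_
      congr 2
      push_cast
      field_simp
      ring
  · congr 1
    · rw [← sin_add_pi_div_two, ← abs_sin_add_nat_mul_pi (π * x / 2 + π / 2) y]
      congr 2
      push_cast
      ring
    · refine prod_congr rfl fun i _ => ?_
      congr 2
      push_cast
      field_simp
      ring

lemma abs_sin_add_abs_cos_sq (ψ : ℝ) : (|sin ψ| + |cos ψ|) ^ 2 = 1 + |sin (2 * ψ)| := by
  rw [sin_two_mul, add_sq, sq_abs, sq_abs, abs_mul, abs_mul, abs_two, ← sin_sq_add_cos_sq ψ]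
  ring

lemma abs_sin_add_abs_cos_le (ψ : ℝ) : |sin ψ| + |cos ψ| ≤ √2 := by
  rw [le_sqrt (by positivity) zero_le_two, abs_sin_add_abs_cos_sq]
  linarith [abs_sin_le_one (2 * ψ)]

/-- With `p = |sin 2φ|`, `q = |cos 2φ|`, both brackets are `√(1 + p)` and `√(1 + q)`; conclude by
Cauchy–Schwarz and `p + q ≤ √2`. -/
lemma two_step_weight_le (φ : ℝ) :
    |sin (2 * φ)| * (|sin φ| + |cos φ|) + |cos (2 * φ)| * (|sin (φ + π / 4)| + |cos (φ + π / 4)|) ≤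
      √(2 + √2) := by
  have hA := abs_sin_add_abs_cos_sq φ
  have hB := abs_sin_add_abs_cos_sq (φ + π / 4)
  rw [show 2 * (φ + π / 4) = 2 * φ + π / 2 by ring, sin_add_pi_div_two] at hB
  have hpq : |sin (2 * φ)| ^ 2 + |cos (2 * φ)| ^ 2 = 1 := by
    rw [sq_abs, sq_abs, sin_sq_add_cos_sq]
  have hsum := abs_sin_add_abs_cos_le (2 * φ)
  rw [le_sqrt (by positivity) (by positivity)]
  nlinarith [sq_nonneg (|sin (2 * φ)| * (|sin (φ + π / 4)| + |cos (φ + π / 4)|) -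
    |cos (2 * φ)| * (|sin φ| + |cos φ|))]

lemma sinProdSum_succ_le {n : ℕ} {M : ℝ} (h : ∀ y, sinProdSum n y ≤ M) (x : ℝ) :
    sinProdSum (n + 1) x ≤ √2 * M := by
  have hM : 0 ≤ M := (sinProdSum_nonneg n 0).trans (h 0)
  rw [sinProdSum_succ]
  calc _ ≤ (|sin (π * x / 2)| + |cos (π * x / 2)|) * M := by
        rw [add_mul]
        gcongr <;> exact h _
    _ ≤ √2 * M := mul_le_mul_of_nonneg_right (abs_sin_add_abs_cos_le _) hM

lemma sinProdSum_add_two_le {n : ℕ} {M : ℝ} (h : ∀ y, sinProdSum n y ≤ M) (x : ℝ) :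
    sinProdSum (n + 2) x ≤ √(2 + √2) * M := by
  have hM : 0 ≤ M := (sinProdSum_nonneg n 0).trans (h 0)
  set φ := π * x / 4
  have h2φ : π * x / 2 = 2 * φ := by ring
  have hφ : π * (x / 2) / 2 = φ := by ring
  have hφ' : π * ((x + 1) / 2) / 2 = φ + π / 4 := by ring
  rw [sinProdSum_succ, sinProdSum_succ, sinProdSum_succ, h2φ, hφ, hφ']
  calc _ ≤ |sin (2 * φ)| * (|sin φ| * M + |cos φ| * M) +
        |cos (2 * φ)| * (|sin (φ + π / 4)| * M + |cos (φ + π / 4)| * M) := by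
        gcongr <;> exact h _
    _ = (|sin (2 * φ)| * (|sin φ| + |cos φ|) +
        |cos (2 * φ)| * (|sin (φ + π / 4)| + |cos (φ + π / 4)|)) * M := by ring
    _ ≤ √(2 + √2) * M := mul_le_mul_of_nonneg_right (two_step_weight_le φ) hM

theorem sinProdSum_le (n : ℕ) (x : ℝ) : sinProdSum n x ≤ √2 * √√(2 + √2) ^ n := by
  have hβ : 1 ≤ √√(2 + √2) := by
    rw [one_le_sqrt, one_le_sqrt]
    linarith [sqrt_nonneg 2]
  have hβ_sq : √√(2 + √2) ^ 2 = √(2 + √2) := sq_sqrt (sqrt_nonneg _)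
  induction n using Nat.twoStepInduction generalizing x with
  | zero => rw [sinProdSum_zero, pow_zero, mul_one]; exact one_le_sqrt.mpr one_le_two
  | one =>
    calc _ ≤ √2 * 1 := sinProdSum_succ_le (fun y => (sinProdSum_zero y).le) x
      _ ≤ √2 * √√(2 + √2) ^ 1 := by rw [pow_one]; gcongr
  | more n ih _ =>
    calc _ ≤ √(2 + √2) * (√2 * √√(2 + √2) ^ n) := sinProdSum_add_two_le ih x
      _ = √2 * √√(2 + √2) ^ (n + 2) := by rw [pow_add, hβ_sq]; ring

lemma rpow_logb_div_two_mul {b y : ℝ} (hb : 0 < b) (hb₁ : b ≠ 1) (hy : 0 < y) (n : ℕ) :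
    b ^ (logb b y / 2 * n) = √y ^ n := by
  rw [show logb b y / 2 = logb b √y by rw [logb, logb, log_sqrt hy.le]; ring,
    rpow_mul hb.le, rpow_logb hb hb₁ (sqrt_pos.mpr hy), rpow_natCast]

theorem epsHat_residue_class_sum_bound :
    ∃ C > (0 : ℝ), ∀ k t a : ℕ, 1 ≤ k → t ≤ k → a ≤ 2 ^ t - 1 →
      ∑ r ∈ (Finset.range (2 ^ k)).filter (fun r => r % 2 ^ t = a),
          ‖epsHat k r‖ ≤
        C * (2 : ℝ) ^ ((1 / 2 - (1 / 2 - Real.logb 2 (Real.sqrt (2 + Real.sqrt 2)) / 2)) *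
              ((k : ℝ) - (t : ℝ))) * ‖epsHat t a‖ * k := by
  refine ⟨√2, by positivity, fun k t a hk htk ha => ?_⟩
  obtain ⟨n, rfl⟩ := Nat.exists_eq_add_of_le htk
  have ha' : a < 2 ^ t := by have := Nat.one_le_two_pow (n := t); omega
  have hexp : (2 : ℝ) ^ ((1 / 2 - (1 / 2 - logb 2 √(2 + √2) / 2)) * (((t + n : ℕ) : ℝ) - t)) =
      √√(2 + √2) ^ n := by
    rw [← rpow_logb_div_two_mul two_pos (by norm_num) (by positivity)]
    push_cast
    ring_nf
  have hk' : (1 : ℝ) ≤ (t + n : ℕ) := by exact_mod_cast hk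
  rw [sum_norm_epsHat_residue_class ha', hexp]
  calc _ ≤ ‖epsHat t a‖ * (√2 * √√(2 + √2) ^ n) := by gcongr; exact sinProdSum_le n _
    _ = √2 * √√(2 + √2) ^ n * ‖epsHat t a‖ * 1 := by ring
    _ ≤ _ := by gcongr
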